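/- Let δ be a circular semi-flower automaton with state set Q, alphabet A, initial-final state q0, and distinguished letter a whose letter map ā is a circular permutation, and suppose the set BPI of branch points going in is exactly {q0, qm} with q0 ≠ qm. Then there exists a word x ∈ A* such that δ*(q0, x) = qm and δ*(qm, x) = q0. -/
import Mathlib


/-- Extension of the transition function `δ : Q → A → Q` to words (lists of letters):
`δ*(q, ε) = q` and `δ*(q, a·w) = δ*(δ(q,a), w)`. -/
def deltaStar {Q A : Type*} (δ : Q → A → Q) : Q → List A → Q
  | q, [] => q
  | q, a :: w => deltaStar δ (δ q a) w

/-- `δ` (with initial-final state `q0`) is a semi-flower automaton: every state is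
accessible and coaccessible, and every cycle passes through `q0` (i.e. for every
nonempty word `w` labelling a cycle at `q`, some prefix of `w` leads from `q` to `q0`). -/
def IsSFA {Q A : Type*} (δ : Q → A → Q) (q0 : Q) : Prop :=
  (∀ q : Q, ∃ w : List A, deltaStar δ q0 w = q) ∧
  (∀ q : Q, ∃ w : List A, deltaStar δ q w = q0) ∧
  (∀ (q : Q) (w : List A), w ≠ [] → deltaStar δ q w = q →
    ∃ u : List A, u <+: w ∧ deltaStar δ q u = q0)

/-- A map `f : Q → Q` is a circular permutation if it is bijective and for all
`p q : Q` there is `k : ℕ` with `f^[k] p = q`. -/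
def IsCircularPerm {Q : Type*} (f : Q → Q) : Prop :=
  Function.Bijective f ∧ ∀ p q : Q, ∃ k : ℕ, f^[k] p = q

/-- The set of branch points going in (bpis): states that are the target of two
distinct transitions. -/
def BPI {Q A : Type*} (δ : Q → A → Q) : Set Q :=
  {q | ∃ pb₁ pb₂ : Q × A, pb₁ ≠ pb₂ ∧ δ pb₁.1 pb₁.2 = q ∧ δ pb₂.1 pb₂.2 = q}


lemma deltaStar_append {Q A : Type*} (δ : Q → A → Q) (q : Q) (u v : List A) :
    deltaStar δ q (u ++ v) = deltaStar δ (deltaStar δ q u) v := by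
  induction u generalizing q with
  | nil => rfl
  | cons c w ih => simp [deltaStar, ih]

lemma deltaStar_replicate {Q A : Type*} (δ : Q → A → Q) (q : Q) (a : A) (k : ℕ) :
    deltaStar δ q (List.replicate k a) = (fun p => δ p a)^[k] q := by
  induction k generalizing q with
  | zero => rfl
  | succ k ih =>
    rw [List.replicate_succ]
    show deltaStar δ (δ q a) (List.replicate k a) = _
    rw [ih, Function.iterate_succ_apply]

/-- In a circular semi-flower automaton with exactly two bpis `q0` and `qm`, there
is a word swapping `q0` and `qm`. -/
theorem csfa_two_bpi_swap_word {Q A : Type*} [Fintype Q] [Nonempty Q] [Fintype A]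
    (δ : Q → A → Q) (q0 : Q) (hSFA : IsSFA δ q0)
    (a : A) (hca : IsCircularPerm (fun q => δ q a))
    (qm : Q) (hne : q0 ≠ qm) (hbpi : BPI δ = {q0, qm}) :
    ∃ x : List A, deltaStar δ q0 x = qm ∧ deltaStar δ qm x = q0 := by
  classical
  obtain ⟨hacc, hco, hcyc⟩ := hSFA
  set f : Q → Q := fun q => δ q a with hf
  obtain ⟨hbij, hcirc⟩ := hca
  have horb : ∀ q : Q, ∃ k, f^[k] q0 = q := fun q => hcirc q0 q
  have hex : ∃ k, 0 < k ∧ f^[k] q0 = q0 := by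
    obtain ⟨k, hk⟩ := hcirc (f q0) q0
    exact ⟨k + 1, Nat.succ_pos k, by rw [Function.iterate_succ_apply]; exact hk⟩
  set n := Nat.find hex with hndef
  obtain ⟨hn0, hnfix⟩ : 0 < n ∧ f^[n] q0 = q0 := Nat.find_spec hex
  have hmin : ∀ k, 0 < k → k < n → f^[k] q0 ≠ q0 := by
    intro k h1 h2 he
    exact Nat.find_min hex h2 ⟨h1, he⟩
  have hmulfix : ∀ t, f^[n * t] q0 = q0 := by
    intro t
    induction t with
    | zero => simp
    | succ t ih =>
      rw [Nat.mul_succ, Function.iterate_add_apply, hnfix, ih]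
  have hmod : ∀ k, f^[k] q0 = f^[k % n] q0 := by
    intro k
    conv_lhs => rw [← Nat.mod_add_div k n]
    rw [Function.iterate_add_apply, hmulfix]
  obtain ⟨m', hm'⟩ := horb qm
  set m := m' % n with hmdef
  have hmlt : m < n := Nat.mod_lt _ hn0
  have hmq : f^[m] q0 = qm := by rw [← hmod]; exact hm'
  have hm0 : 0 < m := by
    rcases Nat.eq_zero_or_pos m with h | h
    · exfalso; apply hne; rw [← hmq, h]; rfl
    · exact h
  -- All non-a transitions land in {q0, qm}
  have htarget : ∀ (q : Q) (b : A), b ≠ a → δ q b = q0 ∨ δ q b = qm := by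
    intro q b hb
    have hmem : δ q b ∈ BPI δ := by
      obtain ⟨p, hp⟩ := hbij.2 (δ q b)
      refine ⟨(q, b), (p, a), ?_, rfl, hp⟩
      intro h
      exact hb (congrArg Prod.snd h)
    rw [hbpi] at hmem
    exact hmem
  -- No edge into qm from states f^[k] q0 with m ≤ k < n
  have hstar : ∀ (k : ℕ) (b : A), m ≤ k → k < n → δ (f^[k] q0) b ≠ qm := by
    intro k b hmk hkn hδ
    have hw : deltaStar δ qm (List.replicate (k - m) a ++ [b]) = qm := by
      rw [deltaStar_append, deltaStar_replicate, ← hf]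
      have h1 : f^[k - m] qm = f^[k] q0 := by
        rw [← hmq, ← Function.iterate_add_apply]
        congr 1
        omega
      rw [h1]
      simpa [deltaStar] using hδ
    obtain ⟨u, hu, huq⟩ := hcyc qm _ (by simp) hw
    obtain ⟨t, ht⟩ := hu
    rcases eq_or_ne t [] with rfl | htne
    · rw [List.append_nil] at ht
      rw [ht, hw] at huq
      exact hne huq.symm
    · have hlen : u.length ≤ k - m := by
        have := congrArg List.length ht
        simp at this
        have : u.length + t.length = (k - m) + 1 := by simpa using this
        have ht1 : 1 ≤ t.length := List.length_pos_iff.mpr htne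
        omega
      have hupr : u <+: List.replicate (k - m) a := by
        apply List.prefix_of_prefix_length_le ⟨t, ht⟩ (List.prefix_append _ _)
        simpa using hlen
      have hurep : u = List.replicate u.length a := by
        apply List.eq_replicate_of_mem
        intro x hx
        exact List.eq_of_mem_replicate (hupr.sublist.subset hx)
      rw [hurep, deltaStar_replicate, ← hf] at huq
      have : f^[u.length + m] q0 = q0 := by
        rw [Function.iterate_add_apply, hmq]; exact huq
      exact hmin (u.length + m) (by omega) (by omega) this
  -- There is a non-a edge into qm
  have hqmB : qm ∈ BPI δ := by rw [hbpi]; right; rfl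
  obtain ⟨pb₁, pb₂, hne12, h1, h2⟩ := hqmB
  have hB : ∃ pb : Q × A, pb.2 ≠ a ∧ δ pb.1 pb.2 = qm := by
    rcases eq_or_ne pb₁.2 a with ha1 | ha1
    · rcases eq_or_ne pb₂.2 a with ha2 | ha2
      · exfalso
        apply hne12
        rw [ha1] at h1
        rw [ha2] at h2
        have : f pb₁.1 = f pb₂.1 := by
          show δ pb₁.1 a = δ pb₂.1 a
          rw [h1, h2]
        have hfst := hbij.1 this
        exact Prod.ext hfst (ha1.trans ha2.symm)
      · exact ⟨pb₂, ha2, h2⟩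
    · exact ⟨pb₁, ha1, h1⟩
  obtain ⟨⟨p, b⟩, hba, hpb⟩ := hB
  -- There is q with δ q b = qm and δ (f^[m] q) b = q0
  have hC : ∃ q : Q, δ q b = qm ∧ δ (f^[m] q) b = q0 := by
    by_contra hcon
    push_neg at hcon
    have hS : ∀ q : Q, δ q b = qm → δ (f^[m] q) b = qm := by
      intro q hq
      rcases htarget (f^[m] q) b hba with h | h
      · exact absurd h (hcon q hq)
      · exact h
    have descent : ∀ j : ℕ, j < m → δ (f^[j] q0) b = qm → False := by
      intro j
      induction j using Nat.strong_induction_on with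
      | _ j ih =>
        intro hjm hj
        have h2 : δ (f^[m + j] q0) b = qm := by
          have := hS _ hj
          rwa [← Function.iterate_add_apply] at this
        rcases lt_or_ge (m + j) n with h | h
        · exact hstar (m + j) b (Nat.le_add_right m j) h h2
        · have heq : f^[m + j] q0 = f^[m + j - n] q0 := by
            rw [hmod (m + j), hmod (m + j - n)]
            congr 1
            rw [Nat.mod_eq_sub_mod h]
          rw [heq] at h2
          exact ih (m + j - n) (by omega) (by omega) h2
    obtain ⟨j0, hj0⟩ := horb p
    have hj : δ (f^[j0 % n] q0) b = qm := by rw [← hmod, hj0]; exact hpb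
    rcases lt_or_ge (j0 % n) m with h | h
    · exact descent _ h hj
    · exact hstar _ b h (Nat.mod_lt _ hn0) hj
  obtain ⟨q, hq1, hq2⟩ := hC
  obtain ⟨j, hjq⟩ := horb q
  refine ⟨List.replicate j a ++ [b], ?_, ?_⟩
  · rw [deltaStar_append, deltaStar_replicate, ← hf, hjq]
    simpa [deltaStar] using hq1
  · rw [deltaStar_append, deltaStar_replicate, ← hf]
    have h3 : f^[j] qm = f^[m] q := by
      rw [← hmq, ← hjq, ← Function.iterate_add_apply, ← Function.iterate_add_apply,
        Nat.add_comm]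
    rw [h3]
    simpa [deltaStar] using hq2
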